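/- arXiv:1805.08261 — 5 statements merged into one kernel-verified Lean document; each statement's English description precedes it below -/
import Mathlib

section
/- Let g : (0, 2π) → ℝ be measurable, non-negative, and non-increasing, with x·g(x) integrable on (0, 2π). Then ∫₀^{2π} g(x) sin(x) dx ≥ 0. -/
open MeasureTheory Real Set

theorem stmt0 (g : ℝ → ℝ)
    (hmeas : Measurable g)
    (hnonneg : ∀ x ∈ Ioo 0 (2 * π), 0 ≤ g x)
    (hmono : AntitoneOn g (Ioo 0 (2 * π)))
    (hint : IntegrableOn (fun x => x * g x) (Ioo 0 (2 * π))) :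
    0 ≤ ∫ x in Ioo 0 (2 * π), g x * Real.sin x := by
  have hπ : 0 < π := Real.pi_pos
  set f : ℝ → ℝ := fun x => g x * Real.sin x with hf
  have hIntf : IntegrableOn f (Ioo 0 (2 * π)) := by
    refine MeasureTheory.Integrable.mono hint ((hmeas.mul Real.measurable_sin).aestronglyMeasurable) ?_
    refine (ae_restrict_iff' measurableSet_Ioo).2 (Filter.Eventually.of_forall fun x hx => ?_)
    have hx0 : 0 ≤ x := le_of_lt hx.1
    have hg := hnonneg x hx
    have hs : |Real.sin x| ≤ x := le_trans (Real.abs_sin_le_abs) (by rw [abs_of_nonneg hx0])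
    have hnorm : ‖f x‖ = g x * |Real.sin x| := by
      simp [hf, abs_mul, abs_of_nonneg hg]
    rw [hnorm]
    calc g x * |Real.sin x| ≤ g x * x := mul_le_mul_of_nonneg_left hs hg
      _ = ‖x * g x‖ := by
          rw [Real.norm_eq_abs, abs_of_nonneg (mul_nonneg hx0 hg)]; ring
  have h1 : IntervalIntegrable f volume 0 π := by
    rw [intervalIntegrable_iff_integrableOn_Ioc_of_le (le_of_lt hπ)]
    exact hIntf.mono_set (fun x hx => ⟨hx.1, lt_of_le_of_lt hx.2 (by linarith)⟩)
  have h2 : IntervalIntegrable f volume π (2 * π) := by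
    rw [intervalIntegrable_iff_integrableOn_Ioc_of_le (by linarith),
        integrableOn_Ioc_iff_integrableOn_Ioo]
    exact hIntf.mono_set (fun x hx => ⟨by linarith [hx.1], hx.2⟩)
  have hsplit : ∫ x in Ioo 0 (2 * π), f x
      = (∫ x in (0:ℝ)..π, f x) + ∫ x in π..(2 * π), f x := by
    rw [intervalIntegral.integral_add_adjacent_intervals h1 h2,
        intervalIntegral.integral_of_le (by linarith), ← integral_Ioc_eq_integral_Ioo]
  have htrans : ∫ x in π..(2 * π), f x = ∫ x in (0:ℝ)..π, f (x + π) := by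
    rw [intervalIntegral.integral_comp_add_right f π]
    norm_num [two_mul]
  have h3 : IntervalIntegrable (fun x => f (x + π)) volume 0 π := by
    have h := h2.comp_add_right π
    have e1 : π - π = (0:ℝ) := by ring
    have e2 : 2 * π - π = π := by ring
    rwa [e1, e2] at h
  have hsum : (∫ x in (0:ℝ)..π, f x) + (∫ x in (0:ℝ)..π, f (x + π))
      = ∫ x in (0:ℝ)..π, (g x - g (x + π)) * Real.sin x := by
    rw [← intervalIntegral.integral_add h1 h3]
    apply intervalIntegral.integral_congr
    intro x hx
    simp only [hf, Real.sin_add_pi]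
    ring
  have hpos : 0 ≤ ∫ x in (0:ℝ)..π, (g x - g (x + π)) * Real.sin x := by
    apply intervalIntegral.integral_nonneg (le_of_lt hπ)
    intro u hu
    rcases eq_or_lt_of_le hu.1 with h0 | h0
    · rw [← h0]; simp
    rcases eq_or_lt_of_le hu.2 with h1' | h1'
    · rw [h1']; simp
    have hs : 0 ≤ Real.sin u := Real.sin_nonneg_of_nonneg_of_le_pi (le_of_lt h0) hu.2
    have hgu : g (u + π) ≤ g u :=
      hmono ⟨h0, by linarith⟩ ⟨by linarith, by linarith⟩ (by linarith)
    exact mul_nonneg (sub_nonneg.2 hgu) hs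
  rw [show (∫ x in Ioo 0 (2 * π), g x * Real.sin x) = ∫ x in Ioo 0 (2 * π), f x from rfl,
      hsplit, htrans, hsum]
  exact hpos
end

section
/- Let g : (0, h) → ℝ be measurable, non-negative, and non-increasing with x·g(x) integrable, and let a > 0, h > 0. Then ∫₀^{h} g(x) sin(a x) dx ≥ 0. -/
/-!
Write `g x = ∫ t in (0, ∞), 1[t < g x] dt` and swap the integrals; Fubini applies because
`|g x * sin (a x)| ≤ a * x * g x`. The integral becomes `∫ t in (0, ∞), ∫ x in {g > t}, sin (a x)`.
As `g` is non-increasing, each superlevel set `{g > t}` is, up to a null set, an interval `(0, s)`,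
and `∫ x in (0, s), sin (a x) = (1 - cos (a s)) / a ≥ 0`.
-/

open MeasureTheory Real Set

lemma setIntegral_Ioi_zero_indicator_Iio_const (c : ℝ) {b : ℝ} (hb : 0 ≤ b) :
    ∫ t in Ioi 0, (Iio b).indicator (fun _ => c) t = b * c := by
  rw [integral_indicator measurableSet_Iio, Measure.restrict_restrict measurableSet_Iio,
    setIntegral_const, Iio_inter_Ioi, Real.volume_real_Ioo_of_le hb, sub_zero, smul_eq_mul]

theorem integral_mul_eq_integral_Ioi_setIntegral_superlevel {α : Type*} [MeasurableSpace α]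
    {μ : Measure α} [SFinite μ] {g f : α → ℝ} (hg : Measurable g) (hf : Measurable f)
    (g_nonneg : ∀ᵐ x ∂μ, 0 ≤ g x) (hgf : Integrable (fun x => g x * f x) μ) :
    ∫ x, g x * f x ∂μ = ∫ t in Ioi 0, ∫ x in {x | t < g x}, f x ∂μ := by
  set F : α → ℝ → ℝ := fun x t => {p : α × ℝ | p.2 < g p.1}.indicator (fun p => f p.1) (x, t)
  have hF : Measurable (Function.uncurry F) :=
    (hf.comp measurable_fst).indicator (measurableSet_lt measurable_snd (hg.comp measurable_fst))
  have hF_int : Integrable (Function.uncurry F) (μ.prod (volume.restrict (Ioi 0))) := by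
    refine (integrable_prod_iff hF.aestronglyMeasurable).2 ⟨?_, ?_⟩
    · refine .of_forall fun x => ?_
      change Integrable ((Iio (g x)).indicator fun _ => f x) _
      refine (integrable_indicator_iff measurableSet_Iio).2 (integrableOn_const (C := f x) ?_)
      rw [Measure.restrict_apply measurableSet_Iio, Iio_inter_Ioi]
      exact measure_Ioo_lt_top.ne
    · refine hgf.norm.congr ?_
      filter_upwards [g_nonneg] with x hx
      have : (fun t => ‖F x t‖) = (Iio (g x)).indicator (fun _ => ‖f x‖) := by
        ext t; by_cases ht : t < g x <;> simp [F, ht]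
      change _ = ∫ t in Ioi 0, ‖F x t‖
      rw [this, setIntegral_Ioi_zero_indicator_Iio_const _ hx, norm_mul, Real.norm_of_nonneg hx]
  calc ∫ x, g x * f x ∂μ = ∫ x, (∫ t in Ioi 0, F x t) ∂μ := by
        refine integral_congr_ae ?_
        filter_upwards [g_nonneg] with x hx
        exact (setIntegral_Ioi_zero_indicator_Iio_const _ hx).symm
    _ = ∫ t in Ioi 0, ∫ x, F x t ∂μ := integral_integral_swap hF_int
    _ = ∫ t in Ioi 0, ∫ x in {x | t < g x}, f x ∂μ := by
        congr 1; ext t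
        exact integral_indicator (measurableSet_lt measurable_const hg)

lemma setIntegral_Ioo_zero_sin_mul_nonneg {a : ℝ} (ha : 0 < a) (s : ℝ) :
    0 ≤ ∫ x in Ioo 0 s, sin (a * x) := by
  rcases le_total s 0 with hs | hs
  · simp [Ioo_eq_empty_of_le hs]
  rw [← integral_Ioc_eq_integral_Ioo, ← intervalIntegral.integral_of_le hs,
    intervalIntegral.integral_comp_mul_left sin ha.ne', mul_zero, integral_sin, cos_zero,
    smul_eq_mul]
  have := cos_le_one (a * s)
  have := inv_pos.2 ha
  positivity

lemma ae_eq_Ioo_sSup {S : Set ℝ} (hS : S ⊆ Ioi 0) (hbdd : BddAbove S)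
    (hdown : ∀ x ∈ S, Ioo 0 x ⊆ S) : S =ᵐ[volume] Ioo 0 (sSup S) := by
  have h_sub : S ⊆ Ioc 0 (sSup S) := fun x hx => ⟨hS hx, le_csSup hbdd hx⟩
  have h_sup : Ioo 0 (sSup S) ⊆ S := by
    intro x hx
    rcases S.eq_empty_or_nonempty with rfl | hne
    · simp at hx
    obtain ⟨y, hy, hxy⟩ := exists_lt_of_lt_csSup hne hx.2
    exact hdown y hy ⟨hx.1, hxy⟩
  exact (h_sub.eventuallyLE.trans Ioo_ae_eq_Ioc.symm.le).antisymm h_sup.eventuallyLE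

lemma setIntegral_sin_mul_nonneg_of_downward_closed {a : ℝ} (ha : 0 < a) {S : Set ℝ}
    (hS : S ⊆ Ioi 0) (hbdd : BddAbove S) (hdown : ∀ x ∈ S, Ioo 0 x ⊆ S) :
    0 ≤ ∫ x in S, sin (a * x) := by
  rw [setIntegral_congr_set (ae_eq_Ioo_sSup hS hbdd hdown)]
  exact setIntegral_Ioo_zero_sin_mul_nonneg ha _

theorem stmt2_general (g : ℝ → ℝ) (h a : ℝ) (ha : 0 < a)
    (hmeas : Measurable g)
    (hnonneg : ∀ x ∈ Ioo 0 h, 0 ≤ g x)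
    (hmono : AntitoneOn g (Ioo 0 h))
    (hint : IntegrableOn (fun x => x * g x) (Ioo 0 h)) :
    0 ≤ ∫ x in Ioo 0 h, g x * Real.sin (a * x) := by
  have g_nonneg : ∀ᵐ x ∂volume.restrict (Ioo 0 h), 0 ≤ g x :=
    ae_restrict_of_forall_mem measurableSet_Ioo hnonneg
  have hsin : Measurable fun x => sin (a * x) := by fun_prop
  have hgf : IntegrableOn (fun x => g x * sin (a * x)) (Ioo 0 h) := by
    refine (hint.const_mul a).mono' (hmeas.mul hsin).aestronglyMeasurable ?_
    filter_upwards [ae_restrict_mem measurableSet_Ioo] with x hx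
    have h_abs_sin : |sin (a * x)| ≤ a * x := by
      simpa [abs_of_pos (mul_pos ha hx.1)] using abs_sin_le_abs (x := a * x)
    rw [norm_mul, Real.norm_of_nonneg (hnonneg x hx), norm_eq_abs]
    nlinarith [hnonneg x hx, h_abs_sin]
  rw [integral_mul_eq_integral_Ioi_setIntegral_superlevel hmeas hsin g_nonneg hgf]
  refine setIntegral_nonneg measurableSet_Ioi fun t _ => ?_
  rw [Measure.restrict_restrict (measurableSet_lt measurable_const hmeas)]
  refine setIntegral_sin_mul_nonneg_of_downward_closed ha (fun x hx => hx.2.1)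
    ⟨h, fun x hx => hx.2.2.le⟩ fun x hx y hy => ?_
  have hy' : y ∈ Ioo 0 h := ⟨hy.1, hy.2.trans hx.2.2⟩
  exact ⟨hx.1.trans_le (hmono hy' hx.2 hy.2.le), hy'⟩

theorem stmt2 (g : ℝ → ℝ) (h a : ℝ) (hh : 0 < h) (ha : 0 < a)
    (hmeas : Measurable g)
    (hnonneg : ∀ x ∈ Ioo 0 h, 0 ≤ g x)
    (hmono : AntitoneOn g (Ioo 0 h))
    (hint : IntegrableOn (fun x => x * g x) (Ioo 0 h)) :
    0 ≤ ∫ x in Ioo 0 h, g x * Real.sin (a * x) :=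
  stmt2_general g h a ha hmeas hnonneg hmono hint
end

section
/- In dimension d = 3, suppose ω̂ : (0,1] → [0,∞) is such that r ↦ r² ω̂(r) is non-increasing on (0,1), not identically constant, and r³ω̂(r) is integrable. Then for every a > 0, the quantity ∫₀^{π/2} sin(2φ) ∫₀^1 r² ω̂(r) sin(r cos(φ) a) dr dφ is strictly positive. -/
/-!
For a non-negative non-increasing weight `g` on `(0, b)`, the layer cake formula writes
`∫ g(r) sin(c r) dr` as an integral over `l > 0` of the integrals of `sin(c r)` over the
superlevel sets `{g > l}`. These are initial segments `(0, t)`, on which `sin(c r)`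
integrates to `(1 - cos(c t)) / c ≥ 0`. When `c b ≤ π` the integrand is itself non-negative,
and it is positive near any `s` with `g s > 0`. With `g(r) = r² ω̂(r)` and `c = a cos φ`, the
inner integral is therefore non-negative for every `φ` and positive for `φ` near `π / 2`, and
it is continuous in `φ`.
-/

open MeasureTheory Real Set

lemma integral_Ioo_sin_const_mul {c t : ℝ} (hc : c ≠ 0) (ht : 0 ≤ t) :
    ∫ r in Ioo 0 t, sin (c * r) = (1 - cos (c * t)) / c := by
  rw [← integral_Ioc_eq_integral_Ioo, ← intervalIntegral.integral_of_le ht,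
    intervalIntegral.integral_comp_mul_left sin hc, mul_zero, integral_sin, cos_zero,
    smul_eq_mul, inv_mul_eq_div]

lemma ae_eq_Ioo_sSup_of_forall_Ioo_subset {S : Set ℝ} (hS : S ⊆ Ioi 0) (hbdd : BddAbove S)
    (hdown : ∀ s ∈ S, Ioo 0 s ⊆ S) : S =ᵐ[volume] Ioo 0 (sSup S) := by
  have hIoo : Ioo 0 (sSup S) ⊆ S := by
    rcases S.eq_empty_or_nonempty with rfl | hne
    · simp
    intro r hr
    obtain ⟨s, hs, hrs⟩ := exists_lt_of_lt_csSup hne hr.2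
    exact hdown s hs ⟨hr.1, hrs⟩
  have hIoc : S ⊆ Ioc 0 (sSup S) := fun s hs => ⟨hS hs, le_csSup hbdd hs⟩
  exact (hIoc.eventuallyLE.trans Ioo_ae_eq_Ioc.symm.le).antisymm hIoo.eventuallyLE

lemma setIntegral_sin_const_mul_nonneg {S : Set ℝ} (hS : S ⊆ Ioi 0) (hbdd : BddAbove S)
    (hdown : ∀ s ∈ S, Ioo 0 s ⊆ S) {c : ℝ} (hc : 0 < c) :
    0 ≤ ∫ r in S, sin (c * r) := by
  rw [setIntegral_congr_set (ae_eq_Ioo_sSup_of_forall_Ioo_subset hS hbdd hdown),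
    integral_Ioo_sin_const_mul hc.ne' (Real.sSup_nonneg fun s hs => (hS hs).le)]
  exact div_nonneg (sub_nonneg.2 (cos_le_one _)) hc.le

theorem integral_mul_eq_integral_setIntegral_lt {α : Type*} [MeasurableSpace α] {μ : Measure α}
    [SFinite μ] {g h : α → ℝ} (hg : Measurable g) (hh : Measurable h)
    (hg0 : ∀ᵐ x ∂μ, 0 ≤ g x) (hgh : Integrable (fun x => g x * h x) μ) :
    ∫ x, g x * h x ∂μ = ∫ l in Ioi 0, ∫ x in {x | l < g x}, h x ∂μ := by
  set F : α → ℝ → ℝ := fun x l => (Iio (g x)).indicator (fun _ => h x) l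
  have hsection : ∀ x, 0 ≤ g x → ∀ e : ℝ,
      ∫ l in Ioi 0, (Iio (g x)).indicator (fun _ => e) l = g x * e := fun x hx e => by
    rw [integral_indicator_const _ measurableSet_Iio, measureReal_restrict_apply measurableSet_Iio,
      Iio_inter_Ioi, volume_real_Ioo_of_le hx, sub_zero, smul_eq_mul]
  have hF_meas : Measurable (Function.uncurry F) := by
    have : Function.uncurry F = {p : α × ℝ | p.2 < g p.1}.indicator (fun p => h p.1) := by
      ext ⟨x, l⟩; simp [F, indicator_apply]
    rw [this]
    exact (hh.comp measurable_fst).indicator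
      (measurableSet_lt measurable_snd (hg.comp measurable_fst))
  have hF_int : Integrable (Function.uncurry F) (μ.prod (volume.restrict (Ioi 0))) := by
    refine (integrable_prod_iff hF_meas.aestronglyMeasurable).2 ⟨ae_of_all _ fun x => ?_, ?_⟩
    · refine (integrable_indicator_iff (measurableSet_Iio (a := g x))).2
        (integrableOn_const (C := h x) ?_)
      rw [Measure.restrict_apply measurableSet_Iio, Iio_inter_Ioi]
      exact measure_Ioo_lt_top (a := (0:ℝ)).ne
    · refine hgh.norm.congr (hg0.mono fun x hx => ?_)
      simp only [Function.uncurry_apply_pair, F, norm_indicator_eq_indicator_norm]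
      rw [hsection x hx, norm_mul, Real.norm_of_nonneg hx]
  calc ∫ x, g x * h x ∂μ = ∫ x, (∫ l in Ioi 0, F x l) ∂μ :=
        integral_congr_ae (hg0.mono fun x hx => (hsection x hx (h x)).symm)
    _ = ∫ l in Ioi 0, ∫ x, F x l ∂μ := integral_integral_swap hF_int
    _ = ∫ l in Ioi 0, ∫ x in {x | l < g x}, h x ∂μ := by
        congr 1; ext l
        rw [← integral_indicator (measurableSet_lt measurable_const hg)]
        simp [F, indicator_apply]

lemma norm_mul_sin_mul_le (x c r : ℝ) : ‖x * sin (c * r)‖ ≤ |c| * ‖r * x‖ := by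
  rw [norm_mul, norm_mul, norm_eq_abs, norm_eq_abs, norm_eq_abs]
  calc |x| * |sin (c * r)| ≤ |x| * |c * r| :=
        mul_le_mul_of_nonneg_left abs_sin_le_abs (abs_nonneg _)
    _ = |c| * (|r| * |x|) := by rw [abs_mul]; ring

lemma integrableOn_mul_sin_const_mul {g : ℝ → ℝ} {b : ℝ} (hg : Measurable g)
    (hint : IntegrableOn (fun r => r * g r) (Ioo 0 b)) (c : ℝ) :
    IntegrableOn (fun r => g r * sin (c * r)) (Ioo 0 b) :=
  Integrable.mono' (hint.norm.const_mul |c|) (by fun_prop)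
    (ae_of_all _ fun r => norm_mul_sin_mul_le (g r) c r)

lemma continuous_integral_mul_sin_mul {g : ℝ → ℝ} {b : ℝ} (hg : Measurable g)
    (hint : IntegrableOn (fun r => r * g r) (Ioo 0 b)) :
    Continuous fun c => ∫ r in Ioo 0 b, g r * sin (c * r) := by
  refine continuous_iff_continuousAt.2 fun c₀ => continuousAt_of_dominated
    (bound := fun r => (|c₀| + 1) * ‖r * g r‖)
    (.of_forall fun c => (by fun_prop : Measurable _).aestronglyMeasurable) ?_
    (hint.norm.const_mul _) (ae_of_all _ fun r => by fun_prop)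
  filter_upwards [Metric.ball_mem_nhds c₀ one_pos] with c hc
  have hc' : |c| ≤ |c₀| + 1 := by
    rw [Metric.mem_ball, dist_eq_norm, norm_eq_abs] at hc
    linarith [abs_sub_abs_le_abs_sub c c₀]
  exact ae_of_all _ fun r => (norm_mul_sin_mul_le (g r) c r).trans
    (mul_le_mul_of_nonneg_right hc' (norm_nonneg _))

section AntitoneWeight

variable {g : ℝ → ℝ} {b c : ℝ}

lemma integral_mul_sin_const_mul_nonneg (hg : Measurable g) (hg0 : ∀ r ∈ Ioo 0 b, 0 ≤ g r)
    (hanti : AntitoneOn g (Ioo 0 b)) (hint : IntegrableOn (fun r => r * g r) (Ioo 0 b))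
    (hc : 0 < c) :
    0 ≤ ∫ r in Ioo 0 b, g r * sin (c * r) := by
  rw [integral_mul_eq_integral_setIntegral_lt hg (by fun_prop)
    ((ae_restrict_iff' measurableSet_Ioo).2 (ae_of_all _ hg0))
    (integrableOn_mul_sin_const_mul hg hint c)]
  refine integral_nonneg fun l => ?_
  rw [Measure.restrict_restrict (measurableSet_lt measurable_const hg)]
  refine setIntegral_sin_const_mul_nonneg (fun r hr => hr.2.1) ⟨b, fun r hr => hr.2.2.le⟩
    (fun s hs r hr => ?_) hc
  have hrb : r ∈ Ioo 0 b := ⟨hr.1, hr.2.trans hs.2.2⟩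
  exact ⟨hs.1.trans_le (hanti hrb hs.2 hr.2.le), hrb⟩

lemma integral_mul_sin_const_mul_pos (hg : Measurable g) (hg0 : ∀ r ∈ Ioo 0 b, 0 ≤ g r)
    (hanti : AntitoneOn g (Ioo 0 b)) (hint : IntegrableOn (fun r => r * g r) (Ioo 0 b))
    (hpos : ∃ s ∈ Ioo 0 b, 0 < g s) (hc : 0 < c)
    (hcb : c * b ≤ π) : 0 < ∫ r in Ioo 0 b, g r * sin (c * r) := by
  obtain ⟨s, hs, hgs⟩ := hpos
  have hsin : ∀ r ∈ Ioo 0 b, 0 ≤ sin (c * r) := fun r hr =>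
    sin_nonneg_of_nonneg_of_le_pi (by nlinarith [hr.1]) (by nlinarith [hr.2])
  have hsub : Ioo 0 s ⊆ Ioo 0 b := Ioo_subset_Ioo_right hs.2.le
  have hcos : cos (c * s) < 1 := by
    rw [← cos_zero]
    exact cos_lt_cos_of_nonneg_of_le_pi le_rfl (by nlinarith [hs.2]) (mul_pos hc hs.1)
  calc 0 < g s * ((1 - cos (c * s)) / c) := mul_pos hgs (div_pos (sub_pos.2 hcos) hc)
    _ = ∫ r in Ioo 0 s, g s * sin (c * r) := by
        rw [integral_const_mul, integral_Ioo_sin_const_mul hc.ne' hs.1.le]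
    _ ≤ ∫ r in Ioo 0 s, g r * sin (c * r) := by
        refine setIntegral_mono_on
          ((Continuous.integrableOn_Icc (by fun_prop)).mono_set Ioo_subset_Icc_self)
          ((integrableOn_mul_sin_const_mul hg hint c).mono_set hsub) measurableSet_Ioo
          fun r hr => mul_le_mul_of_nonneg_right (hanti (hsub hr) hs hr.2.le) (hsin r (hsub hr))
    _ ≤ ∫ r in Ioo 0 b, g r * sin (c * r) :=
        setIntegral_mono_set (integrableOn_mul_sin_const_mul hg hint c)
          ((ae_restrict_iff' measurableSet_Ioo).2 (ae_of_all _ fun r hr =>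
            mul_nonneg (hg0 r hr) (hsin r hr)))
          hsub.eventuallyLE

end AntitoneWeight

lemma integral_sin_two_mul_mul_comp_cos_pos {F : ℝ → ℝ} (hF : Continuous F)
    (hF_nonneg : ∀ c, 0 < c → 0 ≤ F c) (hF_pos : ∀ c, 0 < c → c ≤ π → 0 < F c)
    {a : ℝ} (ha : 0 < a) : 0 < ∫ φ in Ioo 0 (π / 2), sin (2 * φ) * F (cos φ * a) := by
  have hcos : ∀ φ ∈ Ioo 0 (π / 2), 0 < cos φ := fun φ hφ =>
    cos_pos_of_mem_Ioo ⟨by linarith [hφ.1, pi_pos], hφ.2⟩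
  have hsin : ∀ φ ∈ Ioo 0 (π / 2), 0 < sin (2 * φ) := fun φ hφ =>
    sin_pos_of_pos_of_lt_pi (by linarith [hφ.1]) (by linarith [hφ.2])
  -- For `φ > θ`: `cos φ = sin (π / 2 - φ) ≤ π / 2 - φ < π / a`.
  set θ := max 0 (π / 2 - π / a)
  have hθ : θ < π / 2 := max_lt (by positivity) (by linarith [div_pos pi_pos ha])
  have hpos : ∀ φ ∈ Ioo θ (π / 2), 0 < sin (2 * φ) * F (cos φ * a) := by
    intro φ ⟨hθφ, hφ⟩
    have hφ' : φ ∈ Ioo 0 (π / 2) := ⟨(le_max_left _ _).trans_lt hθφ, hφ⟩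
    have hsmall : cos φ * a < π := by
      rw [← lt_div_iff₀ ha, ← sin_pi_div_two_sub]
      linarith [sin_le (by linarith : (0 : ℝ) ≤ π / 2 - φ), le_max_right 0 (π / 2 - π / a)]
    exact mul_pos (hsin φ hφ') (hF_pos _ (mul_pos (hcos φ hφ') ha) hsmall.le)
  rw [setIntegral_pos_iff_support_of_nonneg_ae
    ((ae_restrict_iff' measurableSet_Ioo).2 (ae_of_all _ fun φ hφ =>
      mul_nonneg (hsin φ hφ).le (hF_nonneg _ (mul_pos (hcos φ hφ) ha))))
    ((Continuous.integrableOn_Icc (by fun_prop)).mono_set Ioo_subset_Icc_self)]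
  calc (0 : ENNReal) < volume (Ioo θ (π / 2)) := by simpa using hθ
    _ ≤ volume (Function.support _ ∩ Ioo 0 (π / 2)) := measure_mono fun φ hφ =>
      ⟨(hpos φ hφ).ne', (le_max_left _ _).trans_lt hφ.1, hφ.2⟩

theorem stmt7 (ωhat : ℝ → ℝ)
    (hmeas : Measurable ωhat)
    (hnonneg : ∀ r ∈ Ioc (0:ℝ) 1, 0 ≤ ωhat r)
    (hmono : AntitoneOn (fun r => r ^ 2 * ωhat r) (Ioo 0 1))
    (hnonconst : ¬ ∃ c : ℝ, ∀ r ∈ Ioo (0:ℝ) 1, r ^ 2 * ωhat r = c)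
    (hint : IntegrableOn (fun r => r ^ 3 * ωhat r) (Ioo 0 1)) :
    ∀ a : ℝ, 0 < a →
      0 < ∫ φ in Ioo 0 (π / 2),
        Real.sin (2 * φ) *
          ∫ r in Ioo (0:ℝ) 1, r ^ 2 * ωhat r * Real.sin (r * Real.cos φ * a) := by
  intro a ha
  have hg : Measurable fun r : ℝ => r ^ 2 * ωhat r := by fun_prop
  have hg0 : ∀ r ∈ Ioo (0:ℝ) 1, 0 ≤ r ^ 2 * ωhat r := fun r hr =>
    mul_nonneg (sq_nonneg r) (hnonneg r (Ioo_subset_Ioc_self hr))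
  have hgint : IntegrableOn (fun r : ℝ => r * (r ^ 2 * ωhat r)) (Ioo 0 1) :=
    hint.congr_fun (fun r _ => by ring) measurableSet_Ioo
  have hgpos : ∃ s ∈ Ioo (0:ℝ) 1, 0 < s ^ 2 * ωhat s := by
    by_contra! h
    exact hnonconst ⟨0, fun r hr => (h r hr).antisymm (hg0 r hr)⟩
  simp_rw [show ∀ r φ, r * cos φ * a = cos φ * a * r from fun r φ => by ring]
  exact integral_sin_two_mul_mul_comp_cos_pos (continuous_integral_mul_sin_mul hg hgint)
    (fun c hc => integral_mul_sin_const_mul_nonneg hg hg0 hmono hgint hc)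
    (fun c hc hcπ => integral_mul_sin_const_mul_pos hg hg0 hmono hgint hgpos hc (by simpa))
    ha
end

section
/- In dimension d = 3, let ω̂ : (0,1] → [0,∞) with r²ω̂(r) non-increasing, r³ω̂(r) and r⁵ω̂(r) integrable on (0,1), and ∫₀^1 r³ ω̂(r) dr > 0. Define b(a) = 2π ∫₀^{π/2} sin(2φ) ∫₀^1 r² ω̂(r) sin(r cos(φ) a) dr dφ. Then there is a constant C > 0 depending only on ω̂ such that b(a) ≥ C a for all a ∈ (0, 1). -/
open MeasureTheory Real Set

/-!
Since `sin x ≥ x - x³/6` for `x ≥ 0` and `r²ω̂ ≥ 0`, the inner integral at `t = a cos φ ≥ 0` is at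
least `t I₃ - t³ I₅ / 6`, where `Iₖ = ∫₀¹ rᵏ ω̂`. Integrating against `sin 2φ` with
`∫₀^{π/2} sin 2φ cosⁿ φ dφ = 2/(n+2)` gives `b(a) ≥ 2π (2a I₃/3 - a³ I₅/15)`, and for `a < 1`
this is at least `2π (2 I₃/3 - I₅/15) a`, a positive multiple of `a` because `I₅ ≤ I₃`.
-/

theorem integral_sin_two_mul_mul_cos_pow (n : ℕ) :
    ∫ φ in Ioo 0 (π / 2), sin (2 * φ) * cos φ ^ n = 2 / (n + 2) := by
  have hderiv : ∀ φ, HasDerivAt (fun x => -(2 / (n + 2)) * cos x ^ (n + 2))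
      (sin (2 * φ) * cos φ ^ n) φ := fun φ => by
    refine (((hasDerivAt_cos φ).pow (n + 2)).const_mul _).congr_deriv ?_
    rw [sin_two_mul, show n + 2 - 1 = n + 1 by omega]
    push_cast
    field_simp
    ring
  rw [← integral_Ioc_eq_integral_Ioo, ← intervalIntegral.integral_of_le (by positivity),
    intervalIntegral.integral_eq_sub_of_hasDerivAt (fun φ _ => hderiv φ)
      (Continuous.intervalIntegrable (by fun_prop) _ _)]
  simp

section RadialSinIntegral

variable {w : ℝ → ℝ}

theorem norm_sq_mul_mul_sin_le {r : ℝ} (hr : 0 ≤ r) (hw : 0 ≤ w r) (t : ℝ) :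
    ‖r ^ 2 * w r * sin (r * t)‖ ≤ |t| * (r ^ 3 * w r) := by
  have hsin : |sin (r * t)| ≤ r * |t| := by
    simpa [abs_mul, abs_of_nonneg hr] using abs_sin_le_abs (x := r * t)
  rw [norm_mul, norm_of_nonneg (by positivity), norm_eq_abs]
  calc r ^ 2 * w r * |sin (r * t)| ≤ r ^ 2 * w r * (r * |t|) := by gcongr
    _ = |t| * (r ^ 3 * w r) := by ring

theorem integrableOn_sq_mul_mul_sin (hmeas : Measurable w) (hw : ∀ r ∈ Ioo (0:ℝ) 1, 0 ≤ w r)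
    (hint3 : IntegrableOn (fun r => r ^ 3 * w r) (Ioo 0 1)) (t : ℝ) :
    IntegrableOn (fun r => r ^ 2 * w r * sin (r * t)) (Ioo 0 1) := by
  refine (hint3.const_mul |t|).mono' (by fun_prop) ?_
  filter_upwards [ae_restrict_mem measurableSet_Ioo] with r hr
  exact norm_sq_mul_mul_sin_le hr.1.le (hw r hr) t

theorem norm_integral_sq_mul_mul_sin_le (hw : ∀ r ∈ Ioo (0:ℝ) 1, 0 ≤ w r)
    (hint3 : IntegrableOn (fun r => r ^ 3 * w r) (Ioo 0 1)) (t : ℝ) :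
    ‖∫ r in Ioo (0:ℝ) 1, r ^ 2 * w r * sin (r * t)‖ ≤ |t| * ∫ r in Ioo (0:ℝ) 1, r ^ 3 * w r := by
  rw [← integral_const_mul]
  refine norm_integral_le_of_norm_le (hint3.const_mul |t|) ?_
  filter_upwards [ae_restrict_mem measurableSet_Ioo] with r hr
  exact norm_sq_mul_mul_sin_le hr.1.le (hw r hr) t

theorem measurable_integral_sq_mul_mul_sin (hmeas : Measurable w) :
    Measurable fun t => ∫ r in Ioo (0:ℝ) 1, r ^ 2 * w r * sin (r * t) := by
  have hjoint : Measurable fun p : ℝ × ℝ => p.2 ^ 2 * w p.2 * sin (p.2 * p.1) := by fun_prop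
  exact hjoint.stronglyMeasurable.integral_prod_right'.measurable

theorem sub_cube_le_integral_sq_mul_mul_sin (hmeas : Measurable w)
    (hw : ∀ r ∈ Ioo (0:ℝ) 1, 0 ≤ w r) (hint3 : IntegrableOn (fun r => r ^ 3 * w r) (Ioo 0 1))
    (hint5 : IntegrableOn (fun r => r ^ 5 * w r) (Ioo 0 1)) {t : ℝ} (ht : 0 ≤ t) :
    t * (∫ r in Ioo (0:ℝ) 1, r ^ 3 * w r) - t ^ 3 / 6 * ∫ r in Ioo (0:ℝ) 1, r ^ 5 * w r ≤
      ∫ r in Ioo (0:ℝ) 1, r ^ 2 * w r * sin (r * t) := by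
  rw [← integral_const_mul, ← integral_const_mul, ← integral_sub (hint3.const_mul _)
    (hint5.const_mul _)]
  refine setIntegral_mono_on ((hint3.const_mul _).sub (hint5.const_mul _))
    (integrableOn_sq_mul_mul_sin hmeas hw hint3 t) measurableSet_Ioo fun r hr => ?_
  have hsin := sin_ge_sub_cube (mul_nonneg hr.1.le ht)
  have hw2 : 0 ≤ r ^ 2 * w r := mul_nonneg (by positivity) (hw r hr)
  calc t * (r ^ 3 * w r) - t ^ 3 / 6 * (r ^ 5 * w r)
      = r ^ 2 * w r * (r * t - (r * t) ^ 3 / 6) := by ring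
    _ ≤ r ^ 2 * w r * sin (r * t) := by gcongr

end RadialSinIntegral

theorem le_integral_sin_two_mul_mul_comp_cos {G : ℝ → ℝ} (hG : Measurable G) {A B M : ℝ}
    (hbound : ∀ t ∈ Icc (0:ℝ) 1, ‖G t‖ ≤ M)
    (hlow : ∀ t ∈ Icc (0:ℝ) 1, t * A - t ^ 3 / 6 * B ≤ G t) {a : ℝ} (ha : a ∈ Icc (0:ℝ) 1) :
    a * A * (2 / 3) - a ^ 3 * B / 15 ≤ ∫ φ in Ioo 0 (π / 2), sin (2 * φ) * G (cos φ * a) := by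
  have hcos : ∀ φ ∈ Ioo 0 (π / 2), cos φ * a ∈ Icc (0:ℝ) 1 := fun φ hφ =>
    ⟨mul_nonneg (cos_nonneg_of_mem_Icc ⟨by linarith [hφ.1, pi_pos], hφ.2.le⟩) ha.1,
      mul_le_one₀ (cos_le_one φ) ha.1 ha.2⟩
  have hint_cont : ∀ f : ℝ → ℝ, Continuous f → IntegrableOn f (Ioo 0 (π / 2)) :=
    fun f hf => (hf.integrableOn_Ioc).mono_set Ioo_subset_Ioc_self
  have hcubic : ∫ φ in Ioo 0 (π / 2), sin (2 * φ) * (cos φ * a * A - (cos φ * a) ^ 3 / 6 * B)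
      = a * A * (2 / 3) - a ^ 3 * B / 15 := by
    have hexpand : ∀ φ, sin (2 * φ) * (cos φ * a * A - (cos φ * a) ^ 3 / 6 * B) =
        a * A * (sin (2 * φ) * cos φ ^ 1) - a ^ 3 / 6 * B * (sin (2 * φ) * cos φ ^ 3) :=
      fun φ => by ring
    simp only [hexpand]
    rw [integral_sub ((hint_cont _ (by fun_prop)).const_mul _)
        ((hint_cont _ (by fun_prop)).const_mul _), integral_const_mul, integral_const_mul,
      integral_sin_two_mul_mul_cos_pow, integral_sin_two_mul_mul_cos_pow]
    norm_num
    ring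
  have hint : IntegrableOn (fun φ => sin (2 * φ) * G (cos φ * a)) (Ioo 0 (π / 2)) := by
    refine Measure.integrableOn_of_bounded (M := M) measure_Ioo_lt_top.ne (by fun_prop) ?_
    filter_upwards [ae_restrict_mem measurableSet_Ioo] with φ hφ
    rw [norm_mul]
    exact (mul_le_of_le_one_left (norm_nonneg _) (abs_sin_le_one _)).trans (hbound _ (hcos φ hφ))
  rw [← hcubic]
  refine setIntegral_mono_on (hint_cont _ (by fun_prop)) hint measurableSet_Ioo fun φ hφ => ?_
  exact mul_le_mul_of_nonneg_left (hlow _ (hcos φ hφ))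
    (sin_nonneg_of_nonneg_of_le_pi (by linarith [hφ.1]) (by linarith [hφ.2]))

theorem stmt8_general (ωhat : ℝ → ℝ)
    (hmeas : Measurable ωhat)
    (hnonneg : ∀ r ∈ Ioc (0:ℝ) 1, 0 ≤ ωhat r)
    (hint3 : IntegrableOn (fun r => r ^ 3 * ωhat r) (Ioo 0 1))
    (hint5 : IntegrableOn (fun r => r ^ 5 * ωhat r) (Ioo 0 1))
    (hpos : 0 < ∫ r in Ioo (0:ℝ) 1, r ^ 3 * ωhat r) :
    ∃ C : ℝ, 0 < C ∧ ∀ a ∈ Ioo (0:ℝ) 1,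
      C * a ≤ 2 * π * ∫ φ in Ioo 0 (π / 2),
        Real.sin (2 * φ) *
          ∫ r in Ioo (0:ℝ) 1, r ^ 2 * ωhat r * Real.sin (r * Real.cos φ * a) := by
  set I3 := ∫ r in Ioo (0:ℝ) 1, r ^ 3 * ωhat r
  set I5 := ∫ r in Ioo (0:ℝ) 1, r ^ 5 * ωhat r
  have hω : ∀ r ∈ Ioo (0:ℝ) 1, 0 ≤ ωhat r := fun r hr => hnonneg r (Ioo_subset_Ioc_self hr)
  have hI5 : 0 ≤ I5 := setIntegral_nonneg measurableSet_Ioo fun r hr =>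
    mul_nonneg (pow_nonneg hr.1.le 5) (hω r hr)
  have hI53 : I5 ≤ I3 := setIntegral_mono_on hint5 hint3 measurableSet_Ioo fun r hr =>
    mul_le_mul_of_nonneg_right (pow_le_pow_of_le_one hr.1.le hr.2.le (by norm_num)) (hω r hr)
  refine ⟨2 * π * (2 / 3 * I3 - I5 / 15), by have := pi_pos; nlinarith, fun a ha => ?_⟩
  have hb := le_integral_sin_two_mul_mul_comp_cos (measurable_integral_sq_mul_mul_sin hmeas)
    (fun t ht => (norm_integral_sq_mul_mul_sin_le hω hint3 t).trans
      (mul_le_of_le_one_left hpos.le ((abs_of_nonneg ht.1).trans_le ht.2)))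
    (fun t ht => sub_cube_le_integral_sq_mul_mul_sin hmeas hω hint3 hint5 ht.1)
    (Ioo_subset_Icc_self ha)
  have ha3 : a ^ 3 ≤ a := pow_le_of_le_one ha.1.le ha.2.le (by norm_num)
  have hlin : (2 / 3 * I3 - I5 / 15) * a ≤ a * I3 * (2 / 3) - a ^ 3 * I5 / 15 := by
    nlinarith [mul_le_mul_of_nonneg_left ha3 hI5]
  simp only [mul_assoc _ (cos _) a]
  calc 2 * π * (2 / 3 * I3 - I5 / 15) * a = 2 * π * ((2 / 3 * I3 - I5 / 15) * a) := by ring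
    _ ≤ _ := by gcongr; exact hlin.trans hb

theorem stmt8 (ωhat : ℝ → ℝ)
    (hmeas : Measurable ωhat)
    (hnonneg : ∀ r ∈ Ioc (0:ℝ) 1, 0 ≤ ωhat r)
    (hmono : AntitoneOn (fun r => r ^ 2 * ωhat r) (Ioo 0 1))
    (hint3 : IntegrableOn (fun r => r ^ 3 * ωhat r) (Ioo 0 1))
    (hint5 : IntegrableOn (fun r => r ^ 5 * ωhat r) (Ioo 0 1))
    (hpos : 0 < ∫ r in Ioo (0:ℝ) 1, r ^ 3 * ωhat r) :
    ∃ C : ℝ, 0 < C ∧ ∀ a ∈ Ioo (0:ℝ) 1,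
      C * a ≤ 2 * π * ∫ φ in Ioo 0 (π / 2),
        Real.sin (2 * φ) *
          ∫ r in Ioo (0:ℝ) 1, r ^ 2 * ωhat r * Real.sin (r * Real.cos φ * a) :=
  stmt8_general ωhat hmeas hnonneg hint3 hint5 hpos
end

section
/- In dimension d = 3, let ω : (0,1] → [0,∞) be measurable with ω(r) ≥ m r^{−3−2α} for all r ∈ (0,1), where α ∈ (0,1) and m > 0, and suppose r²ω(r)(1−cos(rc)) is integrable for each c. Define λ_δ(ξ) for ξ ∈ ℝ³ with kernel ω_δ(r) = δ^{−5} ω(r/δ). Then there is C > 0 independent of δ ∈ (0,1) and ξ such that λ_δ(ξ) ≥ C |ξ|^{2α} / δ^{2−2α} whenever δ|ξ| ≥ 1. -/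
/-!
Substituting `s = δ t` turns the integral into `δ⁻² ∫_{|t|<1} ω(|t|) (1 - cos ⟪η, t⟫) dt` with
`η = δ ξ`, `|η| ≥ 1`. The lower bound on `ω` compares this with the model integral of
`|t|^(-3-2α) (1 - cos ⟪η, t⟫)`, which only decreases when the ball shrinks to radius `1/|η|`;
there, scaling and rotation invariance make it `|η|^(2α)` times a fixed positive constant.

The integrand must also be shown integrable, or its integral is the junk value `0`. The hypothesis
on `ω` only controls it against `1 - cos (r c)`, which vanishes on `2πℤ / c`; the frequencies `c`
and `√2 c` have no common zero but `0`, so together they dominate `min 2 ((c r)² / 2)`, which in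
turn bounds `1 - cos ⟪η, t⟫`.
-/

open MeasureTheory Real Set Metric Module
open scoped RealInnerProductSpace

lemma one_sub_cos_add_one_sub_cos_sqrt_two_mul_pos {x : ℝ} (hx : x ≠ 0) :
    0 < (1 - cos x) + (1 - cos (√2 * x)) := by
  by_contra! h
  obtain ⟨n, hn⟩ := (cos_eq_one_iff x).1 (by linarith [cos_le_one x, cos_le_one (√2 * x)])
  obtain ⟨k, hk⟩ := (cos_eq_one_iff (√2 * x)).1 (by linarith [cos_le_one x, cos_le_one (√2 * x)])
  have hn0 : (n : ℝ) ≠ 0 := by rintro h0; simp [h0] at hn; exact hx hn.symm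
  -- `x = 2πn` and `√2 x = 2πk` would make `√2 = k / n` rational
  refine irrational_sqrt_two ⟨k / n, ?_⟩
  have : (k : ℝ) * (2 * π) = √2 * n * (2 * π) := by rw [hk, ← hn]; ring
  push_cast
  rw [div_eq_iff hn0, mul_right_cancel₀ (by positivity) this]

lemma exists_min_two_sq_le_mul_one_sub_cos_add (c : ℝ) :
    ∃ K, ∀ x, |x| ≤ c → min 2 (x ^ 2 / 2) ≤ K * ((1 - cos x) + (1 - cos (√2 * x))) := by
  set g : ℝ → ℝ := fun x => (1 - cos x) + (1 - cos (√2 * x))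
  have hg_nonneg (x : ℝ) : 0 ≤ g x := by
    simp only [g]; linarith [cos_le_one x, cos_le_one (√2 * x)]
  obtain ⟨x₀, hx₀, hmin⟩ := isCompact_Icc.exists_isMinOn (nonempty_Icc.2 (le_max_right c 1))
    (by fun_prop : Continuous g).continuousOn
  have hε : 0 < g x₀ := one_sub_cos_add_one_sub_cos_sqrt_two_mul_pos (by linarith [hx₀.1])
  refine ⟨π ^ 2 / 4 + 2 / g x₀, fun x hx => ?_⟩
  rw [add_mul]
  have hgx := hg_nonneg x
  rcases le_or_gt |x| 1 with hx1 | hx1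
  · have hquad : 2 / π ^ 2 * x ^ 2 ≤ 1 - cos x := by
      linarith [cos_le_one_sub_mul_cos_sq (hx1.trans (by linarith [pi_gt_three]))]
    have : x ^ 2 / 2 ≤ π ^ 2 / 4 * g x :=
      calc x ^ 2 / 2 = π ^ 2 / 4 * (2 / π ^ 2 * x ^ 2) := by field_simp; ring
        _ ≤ π ^ 2 / 4 * g x := by gcongr; simp only [g]; linarith [cos_le_one (√2 * x)]
    have : 0 ≤ 2 / g x₀ * g x := by positivity
    linarith [min_le_right 2 (x ^ 2 / 2)]
  · have heven : g |x| = g x := by rcases abs_choice x with hx' | hx' <;> simp [g, hx']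
    have : 2 ≤ 2 / g x₀ * g x := by
      rw [div_mul_eq_mul_div, le_div_iff₀ hε, ← heven]
      have := isMinOn_iff.1 hmin |x| ⟨hx1.le, hx.trans (le_max_left c 1)⟩
      linarith
    have : 0 ≤ π ^ 2 / 4 * g x := by positivity
    linarith [min_le_left 2 (x ^ 2 / 2)]

lemma integrableOn_mul_min_two_sq {φ : ℝ → ℝ}
    (hφ : AEStronglyMeasurable φ (volume.restrict (Ioo 0 1)))
    (hφ_nonneg : ∀ r ∈ Ioo (0 : ℝ) 1, 0 ≤ φ r)
    (hint : ∀ c : ℝ, IntegrableOn (fun r => φ r * (1 - cos (r * c))) (Ioo 0 1)) (c : ℝ) :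
    IntegrableOn (fun r => φ r * min 2 ((c * r) ^ 2 / 2)) (Ioo 0 1) := by
  obtain ⟨K, hK⟩ := exists_min_two_sq_le_mul_one_sub_cos_add |c|
  refine (((hint c).add (hint (√2 * c))).const_mul K).mono' (by fun_prop) ?_
  refine ae_restrict_of_forall_mem measurableSet_Ioo fun r hr => ?_
  have hcr : |c * r| ≤ |c| := by
    rw [abs_mul, abs_of_pos hr.1]; exact mul_le_of_le_one_right (abs_nonneg c) hr.2.le
  calc ‖φ r * min 2 ((c * r) ^ 2 / 2)‖ = φ r * min 2 ((c * r) ^ 2 / 2) :=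
        norm_of_nonneg (mul_nonneg (hφ_nonneg r hr) (by positivity))
    _ ≤ φ r * (K * ((1 - cos (c * r)) + (1 - cos (√2 * (c * r))))) :=
        mul_le_mul_of_nonneg_left (hK (c * r) hcr) (hφ_nonneg r hr)
    _ = K * (φ r * (1 - cos (r * c)) + φ r * (1 - cos (r * (√2 * c)))) := by ring_nf

section

variable {E : Type*} [NormedAddCommGroup E] [InnerProductSpace ℝ E]

lemma one_sub_cos_inner_le (η t : E) : 1 - cos ⟪η, t⟫ ≤ min 2 ((‖η‖ * ‖t‖) ^ 2 / 2) := by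
  refine le_min (by linarith [neg_one_le_cos ⟪η, t⟫]) ?_
  have := one_sub_sq_div_two_le_cos (x := ⟪η, t⟫)
  have : ⟪η, t⟫ ^ 2 ≤ (‖η‖ * ‖t‖) ^ 2 := by
    rw [← sq_abs]; gcongr; exact abs_real_inner_le_norm η t
  linarith

variable [FiniteDimensional ℝ E] [MeasurableSpace E] [BorelSpace E]

lemma setIntegral_ball_comp_norm_inner_eq (F : ℝ → ℝ → ℝ) (R : ℝ) {e e' : E}
    (h : ‖e‖ = ‖e'‖) :
    ∫ t in ball 0 R, F ‖t‖ ⟪e, t⟫ = ∫ t in ball 0 R, F ‖t‖ ⟪e', t⟫ := by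
  set T : E ≃ₗᵢ[ℝ] E := Submodule.reflection (ℝ ∙ (e - e'))ᗮ
  have hT : T e = e' := Submodule.reflection_sub h
  have hpre : T ⁻¹' ball 0 R = ball 0 R := by ext; simp
  calc ∫ t in ball 0 R, F ‖t‖ ⟪e, t⟫ = ∫ t in T ⁻¹' ball 0 R, F ‖T t‖ ⟪T e, T t⟫ := by
        rw [hpre]; simp only [LinearIsometryEquiv.norm_map, LinearIsometryEquiv.inner_map_map]
    _ = ∫ t in ball 0 R, F ‖t‖ ⟪e', t⟫ := by
        rw [hT]
        exact T.measurePreserving.setIntegral_preimage_emb T.toHomeomorph.measurableEmbedding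
          (fun t => F ‖t‖ ⟪e', t⟫) _

lemma setIntegral_ball_inv_norm_rpow_mul_one_sub_cos (p : ℝ) {η : E} (hη : η ≠ 0) :
    ∫ t in ball 0 ‖η‖⁻¹, ‖t‖ ^ p * (1 - cos ⟪η, t⟫) =
      ‖η‖ ^ (-(finrank ℝ E + p)) * ∫ t in ball 0 1, ‖t‖ ^ p * (1 - cos ⟪‖η‖⁻¹ • η, t⟫) := by
  have ha : 0 < ‖η‖ := norm_pos_iff.2 hη
  have hscale := Measure.setIntegral_comp_smul_of_pos volume
    (fun t : E => ‖t‖ ^ p * (1 - cos ⟪η, t⟫)) (ball 0 1) (inv_pos.2 ha)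
  rw [smul_unitBall_of_pos (inv_pos.2 ha)] at hscale
  have hcomp (t : E) : ‖‖η‖⁻¹ • t‖ ^ p * (1 - cos ⟪η, ‖η‖⁻¹ • t⟫) =
      ‖η‖ ^ (-p) * (‖t‖ ^ p * (1 - cos ⟪‖η‖⁻¹ • η, t⟫)) := by
    rw [norm_smul, norm_inv, norm_norm, mul_rpow (by positivity) (norm_nonneg t), inv_rpow ha.le,
      ← rpow_neg ha.le, real_inner_smul_left, real_inner_smul_right, mul_assoc]
  simp only [hcomp, integral_const_mul, smul_eq_mul] at hscale
  rw [eq_inv_mul_iff_mul_eq₀ (by positivity)] at hscale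
  rw [← hscale, ← mul_assoc, inv_pow, ← rpow_natCast, ← rpow_neg ha.le, ← rpow_add ha,
    neg_add]

lemma setIntegral_ball_comp_norm_div (ω : ℝ → ℝ) (ξ : E) {δ : ℝ} (hδ : 0 < δ) :
    ∫ s in ball 0 δ, ω (‖s‖ / δ) * (1 - cos ⟪ξ, s⟫) =
      δ ^ finrank ℝ E * ∫ t in ball 0 1, ω ‖t‖ * (1 - cos ⟪δ • ξ, t⟫) := by
  have hscale := Measure.setIntegral_comp_smul_of_pos volume
    (fun s : E => ω (‖s‖ / δ) * (1 - cos ⟪ξ, s⟫)) (ball 0 1) hδ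
  rw [smul_unitBall_of_pos hδ, smul_eq_mul, eq_inv_mul_iff_mul_eq₀ (by positivity)] at hscale
  rw [← hscale]
  congr 1
  refine setIntegral_congr_fun measurableSet_ball fun t _ => ?_
  rw [norm_smul, norm_of_nonneg hδ.le, mul_div_cancel_left₀ _ hδ.ne', real_inner_smul_left,
    real_inner_smul_right]

variable [Nontrivial E]

lemma integrableOn_ball_of_norm_le_radial {f : E → ℝ} {g : ℝ → ℝ} {R : ℝ}
    (hf : AEStronglyMeasurable f (volume.restrict (ball 0 R)))
    (hg : IntegrableOn (fun r => r ^ (finrank ℝ E - 1) * g r) (Ioo 0 R))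
    (hfg : ∀ t ∈ ball (0 : E) R, ‖f t‖ ≤ g ‖t‖) :
    IntegrableOn f (ball 0 R) :=
  ((integrableOn_fun_norm_addHaar volume).2 (by simpa only [smul_eq_mul] using hg)).mono' hf
    (ae_restrict_of_forall_mem measurableSet_ball hfg)

lemma integrableOn_ball_rpow_mul_one_sub_cos {p : ℝ} (hp : -(finrank ℝ E + 2 : ℝ) < p)
    (η : E) (R : ℝ) :
    IntegrableOn (fun t : E => ‖t‖ ^ p * (1 - cos ⟪η, t⟫)) (ball 0 R) := by
  refine integrableOn_ball_of_norm_le_radial (g := fun r => r ^ p * ((‖η‖ * r) ^ 2 / 2))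
    (by fun_prop) ?_ fun t _ => ?_
  · have hrpow : IntegrableOn (fun r : ℝ => r ^ ((finrank ℝ E : ℝ) + 1 + p)) (Ioo 0 R) :=
      (intervalIntegral.intervalIntegrable_rpow' (by linarith)).1.mono_set
        (Ioo_subset_Ioc_self.trans Ioc_subset_uIoc)
    refine IntegrableOn.congr_fun (hrpow.const_mul (‖η‖ ^ 2 / 2)) (fun r hr => ?_)
      measurableSet_Ioo
    have hn : 1 ≤ finrank ℝ E := finrank_pos
    have hexp : (finrank ℝ E : ℝ) + 1 + p = ((finrank ℝ E - 1 : ℕ) : ℝ) + p + 2 := by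
      push_cast [Nat.cast_sub hn]; ring
    rw [hexp, rpow_add hr.1, rpow_add hr.1, rpow_natCast, rpow_two]
    ring
  · have := one_sub_cos_inner_le η t
    rw [norm_of_nonneg (mul_nonneg (by positivity) (by linarith [cos_le_one ⟪η, t⟫]))]
    gcongr
    exact this.trans (min_le_right _ _)

lemma integrableOn_unitBall_mul_one_sub_cos {ω : ℝ → ℝ} (hmeas : Measurable ω)
    (hω : ∀ r ∈ Ioo (0 : ℝ) 1, 0 ≤ ω r)
    (hint : ∀ c : ℝ,
      IntegrableOn (fun r => r ^ (finrank ℝ E - 1) * ω r * (1 - cos (r * c))) (Ioo 0 1))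
    (η : E) :
    IntegrableOn (fun t : E => ω ‖t‖ * (1 - cos ⟪η, t⟫)) (ball 0 1) := by
  refine integrableOn_ball_of_norm_le_radial (g := fun r => ω r * min 2 ((‖η‖ * r) ^ 2 / 2))
    (by fun_prop) ?_ fun t ht => ?_
  · simpa only [mul_assoc] using integrableOn_mul_min_two_sq (by fun_prop)
      (fun r hr => mul_nonneg (pow_nonneg hr.1.le _) (hω r hr)) hint ‖η‖
  · rcases eq_or_ne t 0 with rfl | ht0
    · simp
    have hωt := hω ‖t‖ ⟨norm_pos_iff.2 ht0, mem_ball_zero_iff.1 ht⟩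
    rw [norm_of_nonneg (mul_nonneg hωt (by linarith [cos_le_one ⟪η, t⟫]))]
    exact mul_le_mul_of_nonneg_left (one_sub_cos_inner_le η t) hωt

lemma setIntegral_unitBall_rpow_mul_one_sub_cos_pos {p : ℝ} (hp : -(finrank ℝ E + 2 : ℝ) < p)
    {e : E} (he : ‖e‖ = 1) :
    0 < ∫ t in ball 0 1, ‖t‖ ^ p * (1 - cos ⟪e, t⟫) := by
  have hnonneg (t : E) : 0 ≤ ‖t‖ ^ p * (1 - cos ⟪e, t⟫) :=
    mul_nonneg (by positivity) (by linarith [cos_le_one ⟪e, t⟫])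
  rw [setIntegral_pos_iff_support_of_nonneg_ae (ae_of_all _ hnonneg)
    (integrableOn_ball_rpow_mul_one_sub_cos hp e 1)]
  have hnull : volume ((ℝ ∙ e)ᗮ : Set E) = 0 := by
    refine Measure.addHaar_submodule _ _ fun htop => ?_
    have := Submodule.mem_orthogonal_singleton_iff_inner_right.1
      (htop ▸ Submodule.mem_top (x := e))
    rw [real_inner_self_eq_norm_sq, he] at this
    norm_num at this
  -- off the hyperplane `⟪e, t⟫ = 0` the unit ball has `0 < |⟪e, t⟫| < 2π`, so `cos ⟪e, t⟫ ≠ 1`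
  have hsupp : ball 0 1 \ (ℝ ∙ e)ᗮ ⊆
      Function.support (fun t : E => ‖t‖ ^ p * (1 - cos ⟪e, t⟫)) ∩ ball 0 1 := by
    rintro t ⟨ht, hte⟩
    rw [SetLike.mem_coe, Submodule.mem_orthogonal_singleton_iff_inner_right] at hte
    have ht0 : t ≠ 0 := by rintro rfl; simp at hte
    have hinner : |⟪e, t⟫| < 1 := (abs_real_inner_le_norm e t).trans_lt (by simpa [he] using ht)
    have hcos : cos ⟪e, t⟫ ≠ 1 := fun h => hte <| (cos_eq_one_iff_of_lt_of_lt
      (by linarith [neg_abs_le ⟪e, t⟫, pi_gt_three])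
      (by linarith [le_abs_self ⟪e, t⟫, pi_gt_three])).1 h
    exact ⟨mul_ne_zero (rpow_pos_of_pos (norm_pos_iff.2 ht0) p).ne' (sub_ne_zero.2 hcos.symm), ht⟩
  calc (0 : ENNReal) < volume (ball (0 : E) 1) := measure_ball_pos _ _ one_pos
    _ = volume (ball (0 : E) 1 \ (ℝ ∙ e)ᗮ) := (measure_sdiff_null hnull).symm
    _ ≤ _ := measure_mono hsupp

lemma exists_setIntegral_ball_inv_norm_rpow_mul_one_sub_cos_eq {p : ℝ}
    (hp : -(finrank ℝ E + 2 : ℝ) < p) :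
    ∃ C > 0, ∀ η : E, η ≠ 0 →
      ∫ t in ball 0 ‖η‖⁻¹, ‖t‖ ^ p * (1 - cos ⟪η, t⟫) = C * ‖η‖ ^ (-(finrank ℝ E + p)) := by
  obtain ⟨e, he⟩ := exists_norm_eq E zero_le_one
  refine ⟨_, setIntegral_unitBall_rpow_mul_one_sub_cos_pos hp he, fun η hη => ?_⟩
  have hunit : ‖‖η‖⁻¹ • η‖ = ‖e‖ := by
    rw [he, norm_smul, norm_inv, norm_norm, inv_mul_cancel₀ (norm_ne_zero_iff.2 hη)]
  rw [setIntegral_ball_inv_norm_rpow_mul_one_sub_cos p hη, mul_comm,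
    setIntegral_ball_comp_norm_inner_eq (fun r x => r ^ p * (1 - cos x)) 1 hunit]

lemma exists_pos_mul_rpow_le_setIntegral_unitBall {ω : ℝ → ℝ} {m p : ℝ} (hm : 0 < m)
    (hp : -(finrank ℝ E + 2 : ℝ) < p) (hmeas : Measurable ω)
    (hlb : ∀ r ∈ Ioo (0 : ℝ) 1, m * r ^ p ≤ ω r)
    (hint : ∀ c : ℝ,
      IntegrableOn (fun r => r ^ (finrank ℝ E - 1) * ω r * (1 - cos (r * c))) (Ioo 0 1)) :
    ∃ C > 0, ∀ η : E, 1 ≤ ‖η‖ →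
      C * ‖η‖ ^ (-(finrank ℝ E + p)) ≤ ∫ t in ball 0 1, ω ‖t‖ * (1 - cos ⟪η, t⟫) := by
  obtain ⟨C₀, hC₀, hmodel⟩ :=
    exists_setIntegral_ball_inv_norm_rpow_mul_one_sub_cos_eq (E := E) hp
  refine ⟨m * C₀, by positivity, fun η hη => ?_⟩
  have hω (r : ℝ) (hr : r ∈ Ioo (0 : ℝ) 1) : 0 ≤ ω r :=
    (mul_nonneg hm.le (rpow_nonneg hr.1.le p)).trans (hlb r hr)
  have hmodel_int := integrableOn_ball_rpow_mul_one_sub_cos hp η 1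
  have hmodel_nonneg : ∀ t : E, 0 ≤ ‖t‖ ^ p * (1 - cos ⟪η, t⟫) := fun t =>
    mul_nonneg (by positivity) (by linarith [cos_le_one ⟪η, t⟫])
  calc m * C₀ * ‖η‖ ^ (-(finrank ℝ E + p))
      = m * ∫ t in ball 0 ‖η‖⁻¹, ‖t‖ ^ p * (1 - cos ⟪η, t⟫) := by
        rw [hmodel η (norm_pos_iff.1 (one_pos.trans_le hη)), mul_assoc]
    _ ≤ m * ∫ t in ball 0 1, ‖t‖ ^ p * (1 - cos ⟪η, t⟫) := by
        refine mul_le_mul_of_nonneg_left ?_ hm.le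
        exact setIntegral_mono_set hmodel_int (ae_of_all _ hmodel_nonneg)
          (ball_subset_ball (inv_le_one_of_one_le₀ hη)).eventuallyLE
    _ = ∫ t in ball 0 1, m * (‖t‖ ^ p * (1 - cos ⟪η, t⟫)) := (integral_const_mul _ _).symm
    _ ≤ ∫ t in ball 0 1, ω ‖t‖ * (1 - cos ⟪η, t⟫) := by
        refine setIntegral_mono_on (hmodel_int.const_mul m)
          (integrableOn_unitBall_mul_one_sub_cos hmeas hω hint η) measurableSet_ball fun t ht => ?_
        rcases eq_or_ne t 0 with rfl | ht0
        · simp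
        rw [← mul_assoc]
        exact mul_le_mul_of_nonneg_right (hlb ‖t‖ ⟨norm_pos_iff.2 ht0, mem_ball_zero_iff.1 ht⟩)
          (by linarith [cos_le_one ⟪η, t⟫])

end

theorem stmt10_general (α m : ℝ) (hα : α ∈ Ioo (0:ℝ) 1) (hm : 0 < m)
    (ω : ℝ → ℝ)
    (hmeas : Measurable ω)
    (hlb : ∀ r ∈ Ioo (0:ℝ) 1, m * r ^ (-3 - 2 * α) ≤ ω r)
    (hint : ∀ c : ℝ, IntegrableOn (fun r => r ^ 2 * ω r * (1 - Real.cos (r * c))) (Ioo 0 1)) :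
    ∃ C : ℝ, 0 < C ∧ ∀ δ ∈ Ioo (0:ℝ) 1, ∀ ξ : EuclideanSpace ℝ (Fin 3),
      1 ≤ δ * ‖ξ‖ →
      C * ‖ξ‖ ^ (2 * α) / δ ^ (2 - 2 * α) ≤
        ∫ s in Metric.closedBall (0 : EuclideanSpace ℝ (Fin 3)) δ,
          δ ^ (-5 : ℤ) * ω (‖s‖ / δ) * (1 - Real.cos (inner ℝ ξ s : ℝ)) := by
  have hdim : finrank ℝ (EuclideanSpace ℝ (Fin 3)) = 3 := finrank_euclideanSpace_fin
  obtain ⟨C, hC, hlow⟩ := exists_pos_mul_rpow_le_setIntegral_unitBall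
    (E := EuclideanSpace ℝ (Fin 3)) hm (by rw [hdim]; push_cast; linarith [hα.2]) hmeas hlb
    (by simpa [hdim] using hint)
  refine ⟨C, hC, fun δ hδ ξ hξ => ?_⟩
  have hδ0 : 0 < δ := hδ.1
  have hexp : -(((3 : ℕ) : ℝ) + (-3 - 2 * α)) = 2 * α := by push_cast; ring
  rw [hdim, hexp] at hlow
  calc C * ‖ξ‖ ^ (2 * α) / δ ^ (2 - 2 * α)
      = δ ^ (-5 : ℤ) * (δ ^ 3 * (C * ‖δ • ξ‖ ^ (2 * α))) := by
        rw [norm_smul, norm_of_nonneg hδ0.le, mul_rpow hδ0.le (norm_nonneg _),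
          rpow_sub hδ0, rpow_two, zpow_neg]
        field_simp
    _ ≤ δ ^ (-5 : ℤ) * (δ ^ 3 * ∫ t in ball 0 1, ω ‖t‖ * (1 - cos ⟪δ • ξ, t⟫)) := by
        gcongr
        exact hlow (δ • ξ) (by rwa [norm_smul, norm_of_nonneg hδ0.le])
    _ = ∫ s in ball 0 δ, δ ^ (-5 : ℤ) * ω (‖s‖ / δ) * (1 - cos ⟪ξ, s⟫) := by
        have hrescale := setIntegral_ball_comp_norm_div ω ξ hδ0
        rw [hdim] at hrescale
        rw [← hrescale, ← integral_const_mul]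
        simp only [mul_assoc]
    _ = _ := setIntegral_congr_set (ae_eq_of_subset_of_measure_ge ball_subset_closedBall
        (Measure.addHaar_closedBall_eq_addHaar_ball _ _ _).le measurableSet_ball.nullMeasurableSet
        measure_closedBall_lt_top.ne)

theorem stmt10 (α m : ℝ) (hα : α ∈ Ioo (0:ℝ) 1) (hm : 0 < m)
    (ω : ℝ → ℝ)
    (hmeas : Measurable ω)
    (hnonneg : ∀ r ∈ Ioc (0:ℝ) 1, 0 ≤ ω r)
    (hlb : ∀ r ∈ Ioo (0:ℝ) 1, m * r ^ (-3 - 2 * α) ≤ ω r)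
    (hint : ∀ c : ℝ, IntegrableOn (fun r => r ^ 2 * ω r * (1 - Real.cos (r * c))) (Ioo 0 1)) :
    ∃ C : ℝ, 0 < C ∧ ∀ δ ∈ Ioo (0:ℝ) 1, ∀ ξ : EuclideanSpace ℝ (Fin 3),
      1 ≤ δ * ‖ξ‖ →
      C * ‖ξ‖ ^ (2 * α) / δ ^ (2 - 2 * α) ≤
        ∫ s in Metric.closedBall (0 : EuclideanSpace ℝ (Fin 3)) δ,
          δ ^ (-5 : ℤ) * ω (‖s‖ / δ) * (1 - Real.cos (inner ℝ ξ s : ℝ)) :=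
  stmt10_general α m hα hm ω hmeas hlb hint
end
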